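/- Let p ∈ [2,3) and let 𝐗 = (X, 𝕏) be a level-2 rough path over ℝ^d on [0,T] (Chen's relation holds and X, 𝕏 have finite p- and p/2-variation respectively, as two-parameter functions). Define 𝕏̃_{s,t} := 𝕏_{s,t} + (Δ_s X) ⊗ X_{s,t}, where Δ_s X = X_s − X_{s-}. Then for all s ≤ u ≤ t: 𝕏̃_{s,t} − 𝕏̃_{s,u} − 𝕏̃_{u,t} = X^-_{s,u} ⊗ X_{u,t}, where X^-_t := X_{t-} (with X^-_0 := X_0), and 𝕏̃ has finite p/2-variation. -/

import Mathlib

open scoped BigOperators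
open MeasureTheory

noncomputable section

def IsPartition (a b : ℝ) (P : Finset ℝ) : Prop :=
  a ∈ P ∧ b ∈ P ∧ ∀ x ∈ P, x ∈ Set.Icc a b

noncomputable def nextPt (P : Finset ℝ) (b x : ℝ) : ℝ :=
  WithBot.unbotD b (P.filter (fun y => x < y)).min

noncomputable def varSum {E : Type*} [NormedAddCommGroup E] (X : ℝ → E) (p b : ℝ)
    (P : Finset ℝ) : ℝ :=
  ∑ x ∈ P.erase b, ‖X (nextPt P b x) - X x‖ ^ p

def HasFiniteVar {E : Type*} [NormedAddCommGroup E] (X : ℝ → E) (p a b : ℝ) : Prop :=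
  ∃ M : ℝ, ∀ P : Finset ℝ, IsPartition a b P → varSum X p b P ≤ M

noncomputable def varNorm {E : Type*} [NormedAddCommGroup E] (X : ℝ → E) (p a b : ℝ) : ℝ :=
  (sSup {v | ∃ P : Finset ℝ, IsPartition a b P ∧ v = varSum X p b P}) ^ (1 / p)

def Cadlag {E : Type*} [NormedAddCommGroup E] (X : ℝ → E) (a b : ℝ) : Prop :=
  (∀ t ∈ Set.Ico a b, Filter.Tendsto X (nhdsWithin t (Set.Ici t)) (nhds (X t))) ∧
  (∀ t ∈ Set.Ioc a b, ∃ L : E, Filter.Tendsto X (nhdsWithin t (Set.Iio t)) (nhds L))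

noncomputable def minus {E : Type*} [NormedAddCommGroup E] (X : ℝ → E) (a t : ℝ) : E :=
  if t ≤ a then X a else Function.leftLim X t

noncomputable def jump {E : Type*} [NormedAddCommGroup E] (X : ℝ → E) (a t : ℝ) : E :=
  X t - minus X a t

def RRSTendsto {E : Type*} [NormedAddCommGroup E] (a b : ℝ) (S : Finset ℝ → E) (L : E) : Prop :=
  ∀ ε > 0, ∃ P₀ : Finset ℝ, IsPartition a b P₀ ∧
    ∀ P : Finset ℝ, IsPartition a b P → P₀ ⊆ P → ‖S P - L‖ < ε


noncomputable def varSum2 {F : Type*} [NormedAddCommGroup F] (Ξ : ℝ → ℝ → F) (q b : ℝ)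
    (P : Finset ℝ) : ℝ :=
  ∑ x ∈ P.erase b, ‖Ξ x (nextPt P b x)‖ ^ q

def HasFiniteVar2 {F : Type*} [NormedAddCommGroup F] (Ξ : ℝ → ℝ → F) (q a b : ℝ) : Prop :=
  ∃ M : ℝ, ∀ P : Finset ℝ, IsPartition a b P → varSum2 Ξ q b P ≤ M

/-!
The modified Chen relation is Chen's relation for `𝕏` rewritten with `X_s - Δ_s X = X⁻_s`.
For the variation, `|𝕏̃_{s,t}| ≤ |𝕏_{s,t}| + |Δ_s X| |X_{s,t}|`, so by convexity and AM-GM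
`|𝕏̃_{s,t}|^{p/2} ≲ |𝕏_{s,t}|^{p/2} + |Δ_s X|^p + |X_{s,t}|^p`. It remains to bound `∑ |Δ_s X|^p`
over the points of a partition: each jump is the limit of increments of `X` over intervals ending
at the jump time, and short enough such intervals are disjoint, so the sum is at most the
`p`-variation of `X`.
-/

open Filter Topology Set

theorem IsPartition.le {a b : ℝ} {P : Finset ℝ} (hP : IsPartition a b P) : a ≤ b :=
  (hP.2.2 a hP.1).2

theorem nextPt_eq_of_forall_le {P : Finset ℝ} {b y x : ℝ} (hx : x ∈ P) (hyx : y < x)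
    (hgap : ∀ z ∈ P, y < z → x ≤ z) : nextPt P b y = x := by
  have hmin : (P.filter (y < ·)).min = x :=
    le_antisymm (Finset.min_le (by simp [hx, hyx])) <| Finset.le_min fun z hz => by
      rw [Finset.mem_filter] at hz
      exact_mod_cast hgap z hz.1 hz.2
  rw [nextPt, hmin]
  rfl

section Jumps

variable {E : Type*} [NormedAddCommGroup E]

/-- `hsep` says that no point of `F` lies in `[y x, x)`, so in the partition `{a, b} ∪ F ∪ y '' F`
the successor of `y x` is `x`. -/
theorem exists_partition_sum_le_varSum (X : ℝ → E) (p : ℝ) {a b : ℝ} (hab : a ≤ b)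
    {F : Finset ℝ} {y : ℝ → ℝ} (hFb : ∀ x ∈ F, x ≤ b) (hy : ∀ x ∈ F, y x ∈ Ico a x)
    (hsep : ∀ x ∈ F, ∀ x' ∈ F, x' < x → x' < y x) :
    ∃ P, IsPartition a b P ∧ ∑ x ∈ F, ‖X x - X (y x)‖ ^ p ≤ varSum X p b P := by
  set P := insert a (insert b (F ∪ F.image y))
  have hnext : ∀ x ∈ F, nextPt P b (y x) = x := by
    intro x hx
    refine nextPt_eq_of_forall_le (by simp [P, hx]) (hy x hx).2 fun z hz hyz => ?_
    simp only [P, Finset.mem_insert, Finset.mem_union, Finset.mem_image] at hz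
    rcases hz with rfl | rfl | hz | ⟨x', hx', rfl⟩
    · exact absurd hyz (hy x hx).1.not_gt
    · exact hFb x hx
    · exact not_lt.1 fun hzx => lt_asymm hyz (hsep x hx z hz hzx)
    · rcases lt_trichotomy x' x with h | rfl | h
      · exact absurd ((hy x' hx').2.trans (hsep x hx x' hx' h)) hyz.not_gt
      · exact absurd hyz (lt_irrefl _)
      · exact (hsep x' hx' x hx h).le
  have hinj : InjOn y F := fun x hx x' hx' h => by rw [← hnext x hx, ← hnext x' hx', h]
  have hP : IsPartition a b P := by
    refine ⟨by simp [P], by simp [P], fun z hz => ?_⟩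
    simp only [P, Finset.mem_insert, Finset.mem_union, Finset.mem_image] at hz
    rcases hz with rfl | rfl | hz | ⟨x, hx, rfl⟩
    · exact ⟨le_rfl, hab⟩
    · exact ⟨hab, le_rfl⟩
    · exact ⟨((hy z hz).1.trans_lt (hy z hz).2).le, hFb z hz⟩
    · exact ⟨(hy x hx).1, ((hy x hx).2.le.trans (hFb x hx))⟩
  refine ⟨P, hP, ?_⟩
  calc ∑ x ∈ F, ‖X x - X (y x)‖ ^ p = ∑ z ∈ F.image y, ‖X (nextPt P b z) - X z‖ ^ p := by
        rw [Finset.sum_image hinj]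
        exact Finset.sum_congr rfl fun x hx => by rw [hnext x hx]
    _ ≤ varSum X p b P := by
        refine Finset.sum_le_sum_of_subset_of_nonneg (fun z hz => ?_) fun _ _ _ => by positivity
        obtain ⟨x, hx, rfl⟩ := Finset.mem_image.1 hz
        refine Finset.mem_erase.2 ⟨((hy x hx).2.trans_le (hFb x hx)).ne, ?_⟩
        exact Finset.mem_insert_of_mem <| Finset.mem_insert_of_mem <|
          Finset.mem_union_right _ (Finset.mem_image_of_mem y hx)

theorem jump_self (X : ℝ → E) (a : ℝ) : jump X a a = 0 := by
  simp [jump, minus]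

theorem jump_eq_of_tendsto {X : ℝ → E} {a t : ℝ} {L : E} (hat : a < t)
    (hL : Tendsto X (𝓝[<] t) (𝓝 L)) : jump X a t = X t - L := by
  rw [jump, minus, if_neg hat.not_ge, leftLim_eq_of_tendsto hL]

/-- Let all `y x` tend to `x` from the left independently, along `Filter.pi`: the increments
`X x - X (y x)` tend to the jumps, and eventually the intervals `[y x, x]` do not overlap. -/
theorem sum_norm_jump_rpow_le {X : ℝ → E} {p a b M : ℝ} (hp : 0 < p) (hab : a ≤ b)
    (hlim : ∀ t ∈ Ioc a b, ∃ L, Tendsto X (𝓝[<] t) (𝓝 L))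
    (hM : ∀ P, IsPartition a b P → varSum X p b P ≤ M) {F : Finset ℝ}
    (hF : ∀ x ∈ F, x ∈ Icc a b) :
    ∑ x ∈ F, ‖jump X a x‖ ^ p ≤ M := by
  rw [← Finset.sum_erase (a := a) F (by simp [jump_self, hp.ne'])]
  set F' := F.erase a
  have hF' : ∀ x ∈ F', x ∈ Ioc a b := fun x hx =>
    ⟨(hF x (Finset.mem_of_mem_erase hx)).1.lt_of_ne (Finset.ne_of_mem_erase hx).symm,
      (hF x (Finset.mem_of_mem_erase hx)).2⟩
  choose! L hL using hlim
  have hlimsum : Tendsto (fun y : ℝ → ℝ => ∑ x ∈ F', ‖X x - X (y x)‖ ^ p)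
      (Filter.pi fun x => 𝓝[<] x) (𝓝 (∑ x ∈ F', ‖jump X a x‖ ^ p)) := by
    refine tendsto_finsetSum _ fun x hx => ?_
    rw [jump_eq_of_tendsto (hF' x hx).1 (hL x (hF' x hx))]
    exact ((tendsto_const_nhds.sub ((hL x (hF' x hx)).comp (tendsto_eval_pi _ x))).norm).rpow_const
      (Or.inr hp.le)
  have hclose : ∀ᶠ y in Filter.pi (fun x => 𝓝[<] x),
      ∀ x ∈ F', y x < x ∧ ∀ x' ∈ insert a F', x' < x → x' < y x := by
    refine (eventually_all_finset _).2 fun x _ => Eventually.eval_pi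
      (p := fun x z => z < x ∧ ∀ x' ∈ insert a F', x' < x → x' < z) ?_
    have hgt : ∀ x' ∈ insert a F', ∀ᶠ z in 𝓝[<] x, x' < x → x' < z := fun x' _ =>
      if h : x' < x then ((eventually_gt_nhds h).filter_mono nhdsWithin_le_nhds).mono fun _ hz _ => hz
      else Eventually.of_forall fun _ h' => absurd h' h
    exact eventually_mem_nhdsWithin.and ((eventually_all_finset _).2 hgt)
  refine le_of_tendsto hlimsum (hclose.mono fun y hy => ?_)
  obtain ⟨P, hP, hle⟩ := exists_partition_sum_le_varSum X p hab (fun x hx => (hF' x hx).2)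
    (fun x hx => ⟨((hy x hx).2 a (Finset.mem_insert_self _ _) (hF' x hx).1).le, (hy x hx).1⟩)
    (fun x hx x' hx' => (hy x hx).2 x' (Finset.mem_insert_of_mem hx'))
  exact hle.trans (hM P hP)

end Jumps

theorem Real.rpow_add_le_mul_rpow_add_rpow {a b q : ℝ} (ha : 0 ≤ a) (hb : 0 ≤ b) (hq : 1 ≤ q) :
    (a + b) ^ q ≤ 2 ^ (q - 1) * (a ^ q + b ^ q) := by
  lift a to NNReal using ha
  lift b to NNReal using hb
  exact_mod_cast NNReal.rpow_add_le_mul_rpow_add_rpow a b hq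

theorem Real.mul_rpow_half_le_rpow_add_rpow {a b : ℝ} (p : ℝ) (ha : 0 ≤ a) (hb : 0 ≤ b) :
    (a * b) ^ (p / 2) ≤ a ^ p + b ^ p := by
  have hsq : ∀ c : ℝ, 0 ≤ c → c ^ p = (c ^ (p / 2)) ^ 2 := fun c hc => by
    rw [← Real.rpow_two, ← Real.rpow_mul hc]
    ring_nf
  rw [Real.mul_rpow ha hb, hsq a ha, hsq b hb]
  nlinarith [sq_nonneg (a ^ (p / 2) - b ^ (p / 2)), sq_nonneg (a ^ (p / 2)),
    sq_nonneg (b ^ (p / 2))]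

theorem norm_add_vecMulVec_le {ι κ : Type*} [Fintype ι] [Fintype κ] (A : ι → κ → ℝ)
    (v : EuclideanSpace ℝ ι) (w : EuclideanSpace ℝ κ) :
    ‖fun i j => A i j + v i * w j‖ ≤ ‖A‖ + ‖v‖ * ‖w‖ := by
  refine (pi_norm_le_iff_of_nonneg (by positivity)).2 fun i =>
    (pi_norm_le_iff_of_nonneg (by positivity)).2 fun j => ?_
  calc ‖A i j + v i * w j‖ ≤ ‖A i j‖ + ‖v i‖ * ‖w j‖ := (norm_add_le _ _).trans_eq (by rw [norm_mul])
    _ ≤ ‖A‖ + ‖v‖ * ‖w‖ := by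
        gcongr
        · exact (norm_le_pi_norm (A i) j).trans (norm_le_pi_norm A i)
        · exact PiLp.norm_apply_le v i
        · exact PiLp.norm_apply_le w j

theorem varSum2_add_vecMulVec_sub_le {ι κ : Type*} [Fintype ι] [Fintype κ] {p : ℝ} (hp : 2 ≤ p)
    (Ξ : ℝ → ℝ → ι → κ → ℝ) (J : ℝ → EuclideanSpace ℝ ι) (X : ℝ → EuclideanSpace ℝ κ)
    (b : ℝ) (P : Finset ℝ) :
    varSum2 (fun s t i j => Ξ s t i j + J s i * (X t j - X s j)) (p / 2) b P ≤
      2 ^ (p / 2 - 1) *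
        (varSum2 Ξ (p / 2) b P + ∑ x ∈ P.erase b, ‖J x‖ ^ p + varSum X p b P) := by
  simp only [varSum2, varSum, mul_add, Finset.mul_sum, ← Finset.sum_add_distrib]
  gcongr with s
  set t := nextPt P b s
  calc ‖fun i j => Ξ s t i j + J s i * (X t j - X s j)‖ ^ (p / 2)
      ≤ (‖Ξ s t‖ + ‖J s‖ * ‖X t - X s‖) ^ (p / 2) := by
        gcongr
        simpa using norm_add_vecMulVec_le (Ξ s t) (J s) (X t - X s)
    _ ≤ 2 ^ (p / 2 - 1) * (‖Ξ s t‖ ^ (p / 2) + (‖J s‖ * ‖X t - X s‖) ^ (p / 2)) :=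
        Real.rpow_add_le_mul_rpow_add_rpow (by positivity) (by positivity) (by linarith)
    _ ≤ 2 ^ (p / 2 - 1) * (‖Ξ s t‖ ^ (p / 2) + (‖J s‖ ^ p + ‖X t - X s‖ ^ p)) := by
        gcongr
        exact Real.mul_rpow_half_le_rpow_add_rpow p (norm_nonneg _) (norm_nonneg _)
    _ = _ := by ring

theorem tilde_enhancement_chen_and_variation_general
    {d : ℕ} (T p : ℝ) (hp1 : 2 ≤ p)
    (X : ℝ → EuclideanSpace ℝ (Fin d)) (hXc : Cadlag X 0 T)
    (hXv : HasFiniteVar X p 0 T)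
    (𝕏 : ℝ → ℝ → (Fin d → Fin d → ℝ))
    (hChen : ∀ s u t : ℝ, 0 ≤ s → s ≤ u → u ≤ t → t ≤ T →
      𝕏 s t = fun i j => 𝕏 s u i j + 𝕏 u t i j + (X u i - X s i) * (X t j - X u j))
    (h𝕏v : HasFiniteVar2 𝕏 (p / 2) 0 T)
    (Xt : ℝ → ℝ → (Fin d → Fin d → ℝ))
    (hXt : ∀ s t : ℝ, Xt s t = fun i j => 𝕏 s t i j + jump X 0 s i * (X t j - X s j)) :
    (∀ s u t : ℝ, 0 ≤ s → s ≤ u → u ≤ t → t ≤ T →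
        (fun i j => Xt s t i j - Xt s u i j - Xt u t i j) =
          fun i j => (minus X 0 u i - minus X 0 s i) * (X t j - X u j)) ∧
      HasFiniteVar2 Xt (p / 2) 0 T := by
  obtain rfl : Xt = fun s t i j => 𝕏 s t i j + jump X 0 s i * (X t j - X s j) :=
    funext fun s => funext (hXt s)
  refine ⟨fun s u t h0s hsu hut htT => ?_, ?_⟩
  · funext i j
    simp only [hChen s u t h0s hsu hut htT, jump, PiLp.sub_apply]
    ring
  · obtain ⟨M, hM⟩ := hXv
    obtain ⟨M₂, hM₂⟩ := h𝕏v
    refine ⟨2 ^ (p / 2 - 1) * (M₂ + M + M), fun P hP => ?_⟩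
    have hjumps : ∑ x ∈ P.erase T, ‖jump X 0 x‖ ^ p ≤ M :=
      sum_norm_jump_rpow_le (by linarith) hP.le hXc.2 hM fun x hx =>
        hP.2.2 x (Finset.mem_of_mem_erase hx)
    calc varSum2 _ (p / 2) T P
        ≤ 2 ^ (p / 2 - 1) *
            (varSum2 𝕏 (p / 2) T P + ∑ x ∈ P.erase T, ‖jump X 0 x‖ ^ p + varSum X p T P) :=
          varSum2_add_vecMulVec_sub_le hp1 𝕏 (jump X 0) X T P
      _ ≤ 2 ^ (p / 2 - 1) * (M₂ + M + M) := by
          gcongr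
          exacts [hM₂ P hP, hM P hP]

/-- Let `p ∈ [2,3)` and let `(X, 𝕏)` be a càdlàg level-2 rough path over
`ℝ^d` (Chen's relation; `X`, `𝕏` of finite `p`- resp. `p/2`-variation).  Then
`𝕏̃_{s,t} = 𝕏_{s,t} + Δ_sX ⊗ X_{s,t}` satisfies the modified Chen relation
`𝕏̃_{s,t} − 𝕏̃_{s,u} − 𝕏̃_{u,t} = X⁻_{s,u} ⊗ X_{u,t}` and has finite `p/2`-variation. -/
theorem tilde_enhancement_chen_and_variation
    {d : ℕ} (T p : ℝ) (hT : 0 < T) (hp1 : 2 ≤ p) (hp2 : p < 3)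
    (X : ℝ → EuclideanSpace ℝ (Fin d)) (hXc : Cadlag X 0 T)
    (hXv : HasFiniteVar X p 0 T)
    (𝕏 : ℝ → ℝ → (Fin d → Fin d → ℝ))
    (hChen : ∀ s u t : ℝ, 0 ≤ s → s ≤ u → u ≤ t → t ≤ T →
      𝕏 s t = fun i j => 𝕏 s u i j + 𝕏 u t i j + (X u i - X s i) * (X t j - X u j))
    (h𝕏v : HasFiniteVar2 𝕏 (p / 2) 0 T)
    (Xt : ℝ → ℝ → (Fin d → Fin d → ℝ))
    (hXt : ∀ s t : ℝ, Xt s t = fun i j => 𝕏 s t i j + jump X 0 s i * (X t j - X s j)) :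
    (∀ s u t : ℝ, 0 ≤ s → s ≤ u → u ≤ t → t ≤ T →
        (fun i j => Xt s t i j - Xt s u i j - Xt u t i j) =
          fun i j => (minus X 0 u i - minus X 0 s i) * (X t j - X u j)) ∧
      HasFiniteVar2 Xt (p / 2) 0 T :=
  tilde_enhancement_chen_and_variation_general T p hp1 X hXc hXv 𝕏 hChen h𝕏v Xt hXt
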